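/- arXiv:1703.04921 — 3 statements merged into one kernel-verified Lean document; each statement's English description precedes it below -/
import Mathlib

section
/- Let (W,S) be a finite Coxeter system with longest element w₀, and let n : W → G be a map into a monoid G satisfying n(ww') = n(w)n(w') whenever ℓ(ww') = ℓ(w) + ℓ(w'). Then n(w₀)² commutes with n(s) for every s ∈ S (hence with n(w) for all w ∈ W). -/
set_option linter.unusedSectionVars false
set_option maxHeartbeats 1000000

namespace CoxAux
open List CoxeterSystem
variable {B W : Type*} [Group W] [DecidableEq W] {M : CoxeterMatrix B} (cs : CoxeterSystem M W)




/-- The building block of the sign representation. -/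
def permFun (i : B) : W × ℤˣ → W × ℤˣ :=
  fun x => (cs.simple i * x.1 * cs.simple i, if x.1 = cs.simple i then -x.2 else x.2)

theorem simple_conj_eq_simple_iff (i : B) (t : W) :
    cs.simple i * t * cs.simple i = cs.simple i ↔ t = cs.simple i := by
  constructor
  · intro h
    have h1 : cs.simple i * (cs.simple i * t * cs.simple i) * cs.simple i = t := by
      calc cs.simple i * (cs.simple i * t * cs.simple i) * cs.simple i
          = (cs.simple i * cs.simple i) * t * (cs.simple i * cs.simple i) := by group
        _ = t := by rw [cs.simple_mul_simple_self i]; group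
    rw [h] at h1
    rw [← h1, cs.simple_mul_simple_self i, one_mul]
  · rintro rfl
    rw [cs.simple_mul_simple_self i, one_mul]

theorem permFun_involutive (i : B) : Function.Involutive (permFun cs i) := by
  rintro ⟨t, ε⟩
  unfold permFun
  have h1 : cs.simple i * (cs.simple i * t * cs.simple i) * cs.simple i = t := by
    calc cs.simple i * (cs.simple i * t * cs.simple i) * cs.simple i
        = (cs.simple i * cs.simple i) * t * (cs.simple i * cs.simple i) := by group
      _ = t := by rw [cs.simple_mul_simple_self i]; group
  by_cases ht : t = cs.simple i
  · simp [ht, simple_conj_eq_simple_iff, cs.simple_mul_simple_self i, one_mul]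
  · have hne : ¬(cs.simple i * t * cs.simple i = cs.simple i) :=
      fun h => ht ((simple_conj_eq_simple_iff cs i t).mp h)
    simp [ht, hne, h1]

/-- The sign permutation associated to a simple reflection. -/
def perm (i : B) : Equiv.Perm (W × ℤˣ) := (permFun_involutive cs i).toPerm

theorem perm_apply (i : B) (t : W) (ε : ℤˣ) :
    perm cs i (t, ε) = (cs.simple i * t * cs.simple i, if t = cs.simple i then -ε else ε) := rfl

/-- Product of sign permutations along a word. -/
def F (ω : List B) : Equiv.Perm (W × ℤˣ) := (ω.map (perm cs)).prod

@[simp] theorem F_nil : F cs ([] : List B) = 1 := rfl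

theorem F_cons (i : B) (ω : List B) : F cs (i :: ω) = perm cs i * F cs ω := by
  simp [F]

theorem F_append (ω ω' : List B) : F cs (ω ++ ω') = F cs ω * F cs ω' := by
  simp [F]

theorem F_concat (ω : List B) (i : B) : F cs (ω.concat i) = F cs ω * perm cs i := by
  rw [concat_eq_append, F_append]
  simp [F]

theorem F_apply (ω : List B) (t : W) (ε : ℤˣ) :
    F cs ω (t, ε) = (cs.wordProd ω * t * (cs.wordProd ω)⁻¹,
      (-1) ^ ((cs.rightInvSeq ω).count t) * ε) := by
  induction ω with
  | nil => simp
  | cons i ω ih =>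
    rw [F_cons]
    have hris : cs.rightInvSeq (i :: ω) =
        ((cs.wordProd ω)⁻¹ * cs.simple i * cs.wordProd ω) :: cs.rightInvSeq ω := rfl
    have happ : (perm cs i * F cs ω) (t, ε) = perm cs i (F cs ω (t, ε)) := rfl
    rw [happ, ih, perm_apply]
    have hcond : (cs.wordProd ω * t * (cs.wordProd ω)⁻¹ = cs.simple i) ↔
        (t = (cs.wordProd ω)⁻¹ * cs.simple i * cs.wordProd ω) := by
      constructor
      · intro h; rw [← h]; group
      · intro h; rw [h]; group
    rw [hris, cs.wordProd_cons, List.count_cons]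
    simp only [beq_iff_eq, Prod.mk.injEq]
    constructor
    · simp [mul_inv_rev, cs.inv_simple, mul_assoc]
    · by_cases hc : t = (cs.wordProd ω)⁻¹ * cs.simple i * cs.wordProd ω
      · rw [if_pos (hcond.mpr hc), if_pos hc.symm, pow_succ]
        simp [mul_assoc, mul_neg]
      · rw [if_neg (fun h => hc (hcond.mp h)), if_neg (fun h => hc h.symm), add_zero]

theorem F_alternatingWord (i j : B) (m : ℕ) :
    F cs (alternatingWord i j (2 * m)) = (perm cs i * perm cs j) ^ m := by
  induction m with
  | zero => simp [alternatingWord]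
  | succ m ih =>
    have : 2 * (m + 1) = (2 * m + 1) + 1 := by ring
    rw [this, alternatingWord_succ, alternatingWord_succ, F_concat, F_concat, ih, pow_succ,
      mul_assoc]


theorem drop_alternatingWord (i j : B) (k n : ℕ) (h : k ≤ n) :
    (alternatingWord i j n).drop k = alternatingWord i j (n - k) := by
  induction k generalizing n with
  | zero => simp
  | succ k ih =>
    obtain ⟨n, rfl⟩ : ∃ n', n = n' + 1 := ⟨n - 1, by omega⟩
    rw [alternatingWord_succ']
    rw [List.drop_succ_cons, ih n (by omega)]
    congr 1
    omega

private theorem swap_pow (a b : W) (r : ℕ) : b * (a * b) ^ r = (b * a) ^ r * b := by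
  have h : SemiconjBy b (a * b) (b * a) := by
    unfold SemiconjBy
    group
  exact (h.pow_right r).eq

/-- The ratio of products of consecutive alternating words. -/
theorem prod_alternatingWord_ratio (i j : B) (q : ℕ) :
    (cs.wordProd (alternatingWord i j q))⁻¹ * cs.wordProd (alternatingWord i j (q + 1)) =
      ((cs.simple i * cs.simple j)⁻¹) ^ q * cs.simple j := by
  set a := cs.simple i with ha
  set b := cs.simple j with hb
  have ia : a⁻¹ = a := cs.inv_simple i
  have ib : b⁻¹ = b := cs.inv_simple j
  have hji : b * a = (a * b)⁻¹ := by rw [mul_inv_rev, ia, ib]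
  rw [cs.prod_alternatingWord_eq_mul_pow, cs.prod_alternatingWord_eq_mul_pow]
  rcases Nat.even_or_odd q with he | ho
  · obtain ⟨r, hr⟩ := he
    have h1 : ¬ Even (q + 1) := by subst hr; intro ⟨u, hu⟩; omega
    have hq2 : q / 2 = r := by omega
    have hq12 : (q + 1) / 2 = r := by omega
    rw [if_pos ⟨r, hr⟩, if_neg h1, one_mul, hq2, hq12]
    calc ((a * b) ^ r)⁻¹ * (b * (a * b) ^ r)
        = ((a * b) ^ r)⁻¹ * ((b * a) ^ r * b) := by rw [swap_pow]
      _ = ((a * b)⁻¹) ^ r * (((a * b)⁻¹) ^ r * b) := by rw [hji, ← inv_pow]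
      _ = ((a * b)⁻¹) ^ q * b := by rw [← mul_assoc, ← pow_add]; congr 2; omega
  · obtain ⟨r, hr⟩ := ho
    have h0 : ¬ Even q := by subst hr; intro ⟨u, hu⟩; omega
    have h1 : Even (q + 1) := ⟨r + 1, by omega⟩
    have hq2 : q / 2 = r := by omega
    have hq12 : (q + 1) / 2 = r + 1 := by omega
    rw [if_neg h0, if_pos h1, one_mul, hq2, hq12]
    calc (b * (a * b) ^ r)⁻¹ * (a * b) ^ (r + 1)
        = ((b * a) ^ r * b)⁻¹ * (a * b) ^ (r + 1) := by rw [swap_pow]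
      _ = b⁻¹ * ((b * a) ^ r)⁻¹ * (a * b) ^ (r + 1) := by rw [mul_inv_rev]
      _ = b * ((a * b) ^ r) * (a * b) ^ (r + 1) := by
          rw [ib, hji, ← inv_pow, inv_inv]
      _ = (b * a) ^ q * b := by
          rw [mul_assoc, ← pow_add, swap_pow]
          congr 2
          omega
      _ = ((a * b)⁻¹) ^ q * b := by rw [hji]

theorem getD_rightInvSeq_alternatingWord (i j : B) (n k : ℕ) (hk : k < n) :
    (cs.rightInvSeq (alternatingWord i j n)).getD k 1 =
      ((cs.simple i * cs.simple j)⁻¹) ^ (n - k - 1) * cs.simple j := by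
  have h2 : n - k = (n - k - 1) + 1 := by omega
  have hcons : alternatingWord i j (n - k) =
      (if Even (n - k - 1) then j else i) :: alternatingWord i j (n - k - 1) := by
    rw [h2, alternatingWord_succ']
    simp
  have hget : (alternatingWord i j n)[k]? = some (if Even (n - k - 1) then j else i) := by
    rw [← List.head?_drop, drop_alternatingWord i j k n (by omega), hcons]
    rfl
  rw [cs.getD_rightInvSeq, drop_alternatingWord i j (k + 1) n (by omega), hget]
  have h3 : n - (k + 1) = n - k - 1 := by omega
  rw [h3]
  have hprod : cs.simple (if Even (n - k - 1) then j else i) *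
      cs.wordProd (alternatingWord i j (n - k - 1)) =
      cs.wordProd (alternatingWord i j (n - k)) := by
    rw [hcons, cs.wordProd_cons]
  calc (cs.wordProd (alternatingWord i j (n - k - 1)))⁻¹ *
        (Option.map cs.simple (some (if Even (n - k - 1) then j else i))).getD 1 *
        cs.wordProd (alternatingWord i j (n - k - 1))
      = (cs.wordProd (alternatingWord i j (n - k - 1)))⁻¹ *
        (cs.simple (if Even (n - k - 1) then j else i) *
          cs.wordProd (alternatingWord i j (n - k - 1))) := by
        simp [mul_assoc]
    _ = (cs.wordProd (alternatingWord i j (n - k - 1)))⁻¹ *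
        cs.wordProd (alternatingWord i j ((n - k - 1) + 1)) := by rw [hprod, ← h2]
    _ = ((cs.simple i * cs.simple j)⁻¹) ^ (n - k - 1) * cs.simple j :=
        prod_alternatingWord_ratio cs i j (n - k - 1)


theorem count_even_rightInvSeq_braid (i j : B) (t : W) :
    Even ((cs.rightInvSeq (alternatingWord i j (2 * M i j))).count t) := by
  set m := M i j with hm
  set l := cs.rightInvSeq (alternatingWord i j (2 * m)) with hl
  have hlen : l.length = 2 * m := by
    rw [hl, cs.length_rightInvSeq, length_alternatingWord]
  have hpm : ((cs.simple i * cs.simple j)⁻¹) ^ m = 1 := by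
    rw [inv_pow, hm, cs.simple_mul_simple_pow i j, inv_one]
  have htd : l.take m = l.drop m := by
    apply List.ext_getElem
    · simp [hlen]; omega
    · intro k h1 h2
      simp only [List.getElem_take, List.getElem_drop]
      have hk : k < m := by
        have h1' := h1
        simp [hlen] at h1'
        omega
      have e1 : l[k] = l.getD k 1 := by
        rw [List.getD_eq_getElem l 1 (by omega : k < l.length)]
      have e2 : l[m + k]'(by omega : m + k < l.length) = l.getD (m + k) 1 := by
        rw [List.getD_eq_getElem l 1 (by omega : m + k < l.length)]
      rw [e1, e2, hl, getD_rightInvSeq_alternatingWord cs i j (2 * m) k (by omega),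
        getD_rightInvSeq_alternatingWord cs i j (2 * m) (m + k) (by omega)]
      have : 2 * m - k - 1 = (2 * m - (m + k) - 1) + m := by omega
      rw [this, pow_add, hpm, mul_one]
  have hsplit : l = l.take m ++ l.take m := by
    conv_lhs => rw [← List.take_append_drop m l]
    rw [htd]
  rw [hsplit, List.count_append]
  exact ⟨(l.take m).count t, by omega⟩

theorem isLiftable : M.IsLiftable (perm cs) := by
  intro i j
  rw [← F_alternatingWord]
  apply Equiv.ext
  rintro ⟨t, ε⟩
  rw [F_apply]
  have h1 : cs.wordProd (alternatingWord i j (2 * M i j)) = 1 := by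
    rw [cs.prod_alternatingWord_eq_mul_pow, if_pos ⟨M i j, by ring⟩, one_mul,
      (by omega : 2 * M i j / 2 = M i j), cs.simple_mul_simple_pow i j]
  have h2 : ((-1 : ℤˣ)) ^ ((cs.rightInvSeq (alternatingWord i j (2 * M i j))).count t) = 1 :=
    (count_even_rightInvSeq_braid cs i j t).neg_one_pow
  rw [h1, h2]
  simp

/-- The sign representation of the Coxeter group. -/
def permRep : W →* Equiv.Perm (W × ℤˣ) := cs.lift ⟨perm cs, isLiftable cs⟩

theorem permRep_simple (i : B) : permRep cs (cs.simple i) = perm cs i :=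
  cs.lift_apply_simple (isLiftable cs) i

theorem permRep_wordProd (ω : List B) : permRep cs (cs.wordProd ω) = F cs ω := by
  induction ω with
  | nil => rw [cs.wordProd_nil, map_one, F_nil]
  | cons x ω ih => rw [cs.wordProd_cons, map_mul, permRep_simple, F_cons, ih]

/-- The inversion sign cocycle. -/
def eta (w t : W) : ℤˣ := ((permRep cs w) (t, 1)).2

theorem eta_wordProd (ω : List B) (t : W) :
    eta cs (cs.wordProd ω) t = (-1) ^ ((cs.rightInvSeq ω).count t) := by
  unfold eta
  rw [permRep_wordProd, F_apply, mul_one]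

theorem permRep_apply (w t : W) (ε : ℤˣ) :
    permRep cs w (t, ε) = (w * t * w⁻¹, eta cs w t * ε) := by
  obtain ⟨ω, rfl⟩ := cs.wordProd_surjective w
  rw [permRep_wordProd, F_apply, eta_wordProd]

theorem eta_one (t : W) : eta cs 1 t = 1 := by
  unfold eta
  rw [map_one]
  rfl

theorem eta_mul (u v t : W) : eta cs (u * v) t = eta cs u (v * t * v⁻¹) * eta cs v t := by
  unfold eta
  rw [map_mul, Equiv.Perm.mul_apply, permRep_apply cs v, permRep_apply cs u]
  simp [eta]

theorem eta_sq (w t : W) : eta cs w t * eta cs w t = 1 := Int.units_mul_self _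

theorem eta_inv (w t : W) : eta cs w⁻¹ t = eta cs w (w⁻¹ * t * w) := by
  have h := eta_mul cs w w⁻¹ t
  rw [mul_inv_cancel, eta_one, inv_inv] at h
  have h2 := congrArg (fun z => eta cs w (w⁻¹ * t * w) * z) h
  simpa [← mul_assoc, eta_sq] using h2.symm

theorem eta_simple (i : B) (t : W) :
    eta cs (cs.simple i) t = if t = cs.simple i then -1 else 1 := by
  have h := eta_wordProd cs [i] t
  rw [cs.wordProd_singleton] at h
  rw [h, cs.rightInvSeq_singleton]
  by_cases ht : t = cs.simple i
  · simp [ht]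
  · have hts : ¬ (cs.simple i = t) := fun h' => ht h'.symm
    simp [List.count_cons, ht, hts]

theorem eta_mem_iff {ω : List B} (hr : cs.IsReduced ω) (t : W) :
    eta cs (cs.wordProd ω) t = -1 ↔ t ∈ cs.rightInvSeq ω := by
  rw [eta_wordProd]
  constructor
  · intro h
    by_contra hmem
    rw [List.count_eq_zero.mpr hmem, pow_zero] at h
    exact absurd h (by decide)
  · intro hmem
    rw [List.count_eq_one_of_mem hr.nodup_rightInvSeq hmem, pow_one]

theorem length_mul_lt_of_eta_neg (w t : W) (h : eta cs w t = -1) :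
    cs.length (w * t) < cs.length w := by
  obtain ⟨ω, hred, rfl⟩ := cs.exists_reduced_word' w
  exact (cs.isRightInversion_of_mem_rightInvSeq hred ((eta_mem_iff cs hred t).mp h)).2

theorem isReflection_of_eta_neg (w t : W) (h : eta cs w t = -1) : cs.IsReflection t := by
  obtain ⟨ω, hred, rfl⟩ := cs.exists_reduced_word' w
  exact cs.isReflection_of_mem_rightInvSeq ω ((eta_mem_iff cs hred t).mp h)

theorem eta_refl (t : W) (ht : cs.IsReflection t) : eta cs t t = -1 := by
  obtain ⟨v, i, rfl⟩ := ht
  set t := v * cs.simple i * v⁻¹ with htdef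
  have hvt : v⁻¹ * t * v = cs.simple i := by rw [htdef]; group
  have h1 : eta cs t t = eta cs v (cs.simple i) * eta cs (cs.simple i * v⁻¹) t := by
    have : t = v * (cs.simple i * v⁻¹) := by rw [htdef]; group
    nth_rewrite 1 [this]
    rw [eta_mul]
    congr 2
    rw [mul_inv_rev, inv_inv, cs.inv_simple]
    calc cs.simple i * v⁻¹ * t * (v * cs.simple i)
        = cs.simple i * (v⁻¹ * t * v) * cs.simple i := by group
      _ = cs.simple i := by rw [hvt, cs.simple_mul_simple_self, one_mul]
  have h2 : eta cs (cs.simple i * v⁻¹) t = -(eta cs v (cs.simple i)) := by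
    rw [eta_mul, inv_inv, hvt, eta_simple, if_pos rfl, eta_inv, hvt]
    simp
  rw [h1, h2, mul_neg, eta_sq]

theorem eta_longest_neg (w₀ : W) (hw₀ : ∀ w, cs.length w ≤ cs.length w₀)
    (t : W) (ht : cs.IsReflection t) : eta cs w₀ t = -1 := by
  rcases Int.units_eq_one_or (eta cs w₀ t) with h | h
  · exfalso
    have h1 : eta cs (w₀ * t) t = -1 := by
      rw [eta_mul]
      have htt : t * t * t⁻¹ = t := by group
      rw [htt, h, one_mul, eta_refl cs t ht]
    have h2 := length_mul_lt_of_eta_neg cs (w₀ * t) t h1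
    rw [mul_assoc, ht.mul_self, mul_one] at h2
    exact absurd (hw₀ (w₀ * t)) (by omega)
  · exact h

theorem length_mul_longest [Finite W] (w₀ : W) (hw₀ : ∀ w, cs.length w ≤ cs.length w₀) (w : W) :
    cs.length (w * w₀) = cs.length w₀ - cs.length w := by
  classical
  haveI := Fintype.ofFinite W
  set S : W → Finset W := fun u => Finset.univ.filter (fun t => eta cs u t = -1) with hS
  have hmem : ∀ u t, t ∈ S u ↔ eta cs u t = -1 := by intro u t; simp [hS]
  have hcard : ∀ u, (S u).card = cs.length u := by
    intro u
    obtain ⟨ω, hred, rfl⟩ := cs.exists_reduced_word' u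
    have heq : S (cs.wordProd ω) = (cs.rightInvSeq ω).toFinset := by
      ext t
      rw [hmem, List.mem_toFinset, eta_mem_iff cs hred]
    rw [heq, List.toFinset_card_of_nodup hred.nodup_rightInvSeq, cs.length_rightInvSeq]
    exact hred.symm
  set T : Finset W := Finset.univ.filter (fun t => cs.IsReflection t) with hT
  have hmemT : ∀ t, t ∈ T ↔ cs.IsReflection t := by intro t; simp [hT]
  have hST : ∀ u, S u ⊆ T := fun u t htS =>
    (hmemT t).mpr (isReflection_of_eta_neg cs u t ((hmem u t).mp htS))
  have hTS : T ⊆ S w₀ := fun t htT =>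
    (hmem w₀ t).mpr (eta_longest_neg cs w₀ hw₀ t ((hmemT t).mp htT))
  have hTcard : T.card = cs.length w₀ := by
    rw [← hcard w₀]
    congr 1
    exact (Finset.Subset.antisymm (hST w₀) hTS).symm
  set c : W → W := fun t => w₀⁻¹ * t * w₀ with hc
  have hcinj : Function.Injective c := by
    intro x y h
    simp only [hc] at h
    exact mul_left_cancel (mul_right_cancel h)
  have himg : (S w).image c ⊆ T := by
    intro t htimg
    obtain ⟨u, hu, rfl⟩ := Finset.mem_image.mp htimg
    have hrefl : cs.IsReflection u := isReflection_of_eta_neg cs w u ((hmem w u).mp hu)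
    have hconj := hrefl.conj w₀⁻¹
    rw [inv_inv] at hconj
    exact (hmemT _).mpr hconj
  have hkey : S (w * w₀) = T \ (S w).image c := by
    ext t
    rw [hmem, Finset.mem_sdiff, hmemT]
    constructor
    · intro h
      have htrefl : cs.IsReflection t := isReflection_of_eta_neg cs _ t h
      refine ⟨htrefl, ?_⟩
      intro hmem'
      obtain ⟨u, hu, hut⟩ := Finset.mem_image.mp hmem'
      have hu' : eta cs w u = -1 := (hmem w u).mp hu
      have hmul := eta_mul cs w w₀ t
      rw [h, eta_longest_neg cs w₀ hw₀ t htrefl] at hmul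
      have hone : eta cs w (w₀ * t * w₀⁻¹) = 1 := by
        rcases Int.units_eq_one_or (eta cs w (w₀ * t * w₀⁻¹)) with h' | h'
        · exact h'
        · rw [h'] at hmul
          exact absurd hmul (by decide)
      have huu : u = w₀ * t * w₀⁻¹ := by
        rw [← hut]
        simp only [hc]
        group
      rw [huu, hone] at hu'
      exact absurd hu' (by decide)
    · rintro ⟨htrefl, hnimg⟩
      have h1 : eta cs w₀ t = -1 := eta_longest_neg cs w₀ hw₀ t htrefl
      have h2 : eta cs w (w₀ * t * w₀⁻¹) = 1 := by
        rcases Int.units_eq_one_or (eta cs w (w₀ * t * w₀⁻¹)) with h' | h'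
        · exact h'
        · exfalso
          apply hnimg
          refine Finset.mem_image.mpr ⟨w₀ * t * w₀⁻¹, (hmem w _).mpr h', ?_⟩
          simp only [hc]
          group
      rw [eta_mul, h1, h2, one_mul]
  have hfin := congrArg Finset.card hkey
  rw [hcard, Finset.card_sdiff_of_subset himg, Finset.card_image_of_injective _ hcinj, hcard, hTcard] at hfin
  exact hfin

theorem longest_mul_self [Finite W] (w₀ : W) (hw₀ : ∀ w, cs.length w ≤ cs.length w₀) :
    w₀ * w₀ = 1 := by
  apply cs.length_eq_zero_iff.mp
  rw [length_mul_longest cs w₀ hw₀ w₀]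
  omega

theorem length_longest_mul [Finite W] (w₀ : W) (hw₀ : ∀ w, cs.length w ≤ cs.length w₀) (w : W) :
    cs.length (w₀ * w) = cs.length w₀ - cs.length w := by
  have hinv : w₀⁻¹ = w₀ := inv_eq_of_mul_eq_one_right (longest_mul_self cs w₀ hw₀)
  rw [← cs.length_inv, mul_inv_rev, hinv, length_mul_longest cs w₀ hw₀ w⁻¹, cs.length_inv]

end CoxAux

/-- Let `(W, S)` be a finite Coxeter system with longest element `w₀`, and let `n : W → G` be a
map into a monoid which is multiplicative on length-additive products. Then `n(w₀)²` commutes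
with `n(s)` for every simple reflection `s ∈ S`, and hence with `n(w)` for every `w ∈ W`. -/
theorem longest_element_sq_commutes {B W : Type*} [Group W] [Finite W] {M : CoxeterMatrix B}
    (cs : CoxeterSystem M W) (w₀ : W) (hw₀ : ∀ w : W, cs.length w ≤ cs.length w₀)
    {G : Type*} [Monoid G] (n : W → G)
    (hmul : ∀ w w' : W, cs.length (w * w') = cs.length w + cs.length w' →
      n (w * w') = n w * n w') :
    (∀ i : B, Commute (n w₀ * n w₀) (n (cs.simple i))) ∧
    (∀ w : W, Commute (n w₀ * n w₀) (n w)) := by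
  classical
  have hsq : w₀ * w₀ = 1 := CoxAux.longest_mul_self cs w₀ hw₀
  have hlen_r : ∀ w, cs.length (w * w₀) = cs.length w₀ - cs.length w :=
    CoxAux.length_mul_longest cs w₀ hw₀
  have hlen_l : ∀ w, cs.length (w₀ * w) = cs.length w₀ - cs.length w :=
    CoxAux.length_longest_mul cs w₀ hw₀
  have key : ∀ i : B, ∃ j : B, w₀ * cs.simple i * w₀ = cs.simple j ∧
      n w₀ * n (cs.simple i) = n (cs.simple j) * n w₀ := by
    intro i
    have h1 : 1 ≤ cs.length w₀ := cs.length_simple i ▸ hw₀ (cs.simple i)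
    have hsi : cs.length (w₀ * cs.simple i) = cs.length w₀ - 1 := by
      rw [hlen_l (cs.simple i), cs.length_simple]
    have hsi' : cs.length (cs.simple i * w₀) = cs.length w₀ - 1 := by
      rw [hlen_r (cs.simple i), cs.length_simple]
    have hone : cs.length (w₀ * cs.simple i * w₀) = 1 := by
      rw [hlen_r (w₀ * cs.simple i), hsi]
      omega
    obtain ⟨j, hj⟩ := cs.length_eq_one_iff.mp hone
    have hsj' : cs.length (cs.simple j * w₀) = cs.length w₀ - 1 := by
      rw [hlen_r (cs.simple j), cs.length_simple]
    have hj2 : cs.simple j * w₀ = w₀ * cs.simple i := by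
      rw [← hj]
      calc w₀ * cs.simple i * w₀ * w₀ = w₀ * cs.simple i * (w₀ * w₀) := by group
        _ = w₀ * cs.simple i := by rw [hsq, mul_one]
    have e1 : n w₀ = n (w₀ * cs.simple i) * n (cs.simple i) := by
      have hadd : cs.length (w₀ * cs.simple i * cs.simple i) =
          cs.length (w₀ * cs.simple i) + cs.length (cs.simple i) := by
        rw [cs.simple_mul_simple_cancel_right, hsi, cs.length_simple]
        omega
      have := hmul (w₀ * cs.simple i) (cs.simple i) hadd
      rwa [cs.simple_mul_simple_cancel_right] at this
    have e2 : n w₀ = n (cs.simple j) * n (w₀ * cs.simple i) := by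
      have hadd : cs.length (cs.simple j * (cs.simple j * w₀)) =
          cs.length (cs.simple j) + cs.length (cs.simple j * w₀) := by
        rw [cs.simple_mul_simple_cancel_left, hsj', cs.length_simple]
        omega
      have := hmul (cs.simple j) (cs.simple j * w₀) hadd
      rw [cs.simple_mul_simple_cancel_left] at this
      rwa [hj2] at this
    refine ⟨j, hj, ?_⟩
    calc n w₀ * n (cs.simple i)
        = n (cs.simple j) * (n (w₀ * cs.simple i) * n (cs.simple i)) := by
          rw [e2, mul_assoc]
      _ = n (cs.simple j) * n w₀ := by rw [← e1]
  have main1 : ∀ i : B, Commute (n w₀ * n w₀) (n (cs.simple i)) := by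
    intro i
    obtain ⟨j, hj, hnj⟩ := key i
    obtain ⟨k, hk, hnk⟩ := key j
    have hki : cs.simple k = cs.simple i := by
      rw [← hk, ← hj]
      calc w₀ * (w₀ * cs.simple i * w₀) * w₀
          = (w₀ * w₀) * cs.simple i * (w₀ * w₀) := by group
        _ = cs.simple i := by rw [hsq]; group
    show n w₀ * n w₀ * n (cs.simple i) = n (cs.simple i) * (n w₀ * n w₀)
    calc n w₀ * n w₀ * n (cs.simple i)
        = n w₀ * (n w₀ * n (cs.simple i)) := by rw [mul_assoc]
      _ = n w₀ * (n (cs.simple j) * n w₀) := by rw [hnj]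
      _ = (n w₀ * n (cs.simple j)) * n w₀ := by rw [mul_assoc]
      _ = (n (cs.simple k) * n w₀) * n w₀ := by rw [hnk]
      _ = n (cs.simple i) * (n w₀ * n w₀) := by rw [hki, mul_assoc]
  refine ⟨main1, ?_⟩
  have main2 : ∀ (m : ℕ) (w : W), cs.length w = m → Commute (n w₀ * n w₀) (n w) := by
    intro m
    induction m using Nat.strong_induction_on with
    | _ m ih =>
      intro w hw
      rcases eq_or_ne w 1 with rfl | hne
      · have h1 : n w₀ = n w₀ * n 1 := by
          have := hmul w₀ 1 (by simp)
          rwa [mul_one] at this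
        have h2 : n w₀ = n 1 * n w₀ := by
          have := hmul 1 w₀ (by simp)
          rwa [one_mul] at this
        show n w₀ * n w₀ * n 1 = n 1 * (n w₀ * n w₀)
        rw [mul_assoc, ← h1, ← mul_assoc, ← h2]
      · obtain ⟨i, hi⟩ := cs.exists_leftDescent_of_ne_one hne
        have hdesc : cs.length (cs.simple i * w) + 1 = cs.length w := by
          rcases cs.length_simple_mul w i with h | h
          · exact absurd hi (by rw [CoxeterSystem.IsLeftDescent]; omega)
          · exact h
        have hadd : cs.length (cs.simple i * (cs.simple i * w)) =
            cs.length (cs.simple i) + cs.length (cs.simple i * w) := by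
          rw [cs.simple_mul_simple_cancel_left, cs.length_simple]
          omega
        have hn : n w = n (cs.simple i) * n (cs.simple i * w) := by
          have := hmul (cs.simple i) (cs.simple i * w) hadd
          rwa [cs.simple_mul_simple_cancel_left] at this
        rw [hn]
        exact (main1 i).mul_right (ih (cs.length (cs.simple i * w)) (by omega) _ rfl)
  exact fun w => main2 (cs.length w) w rfl
end

section
/- Let H be the generic Hecke algebra over a commutative ring R of a finite Coxeter system (W,S) with parameters q_s, and let δ' : H → R be the R-linear form with δ'(T_1) = 1 and δ'(T_w) = 0 for w ≠ 1. Then: (a) δ' is a symmetric trace, i.e., δ'(ab) = δ'(ba) for all a, b ∈ H; and (b) if each q_s is invertible in R, then δ' is non-degenerate in the sense that the only left ideal (respectively right ideal) of H contained in the kernel of δ' is the zero ideal. -/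
/-- `IsGenericHecke cs q T` says that the `R`-algebra `H` together with the family
`(T_w)_{w ∈ W}` is the generic Hecke algebra of the Coxeter system `cs` with parameters
`(q_s)_{s ∈ S}`: the `T_w` form an `R`-basis, `T_1 = 1`, the braid relations
`T_w T_{w'} = T_{ww'}` hold when `ℓ(ww') = ℓ(w) + ℓ(w')`, and the quadratic relations
`T_s² = q_s T_1 + (q_s − 1) T_s` hold for simple reflections; the parameters agree on
conjugate simple reflections. -/
structure IsGenericHecke {B W R H : Type*} [Group W] [CommRing R] [Ring H] [Algebra R H]
    {M : CoxeterMatrix B} (cs : CoxeterSystem M W) (q : B → R) (T : W → H) : Prop where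
  linearIndependent : LinearIndependent R T
  span_top : Submodule.span R (Set.range T) = ⊤
  T_one : T 1 = 1
  braid : ∀ w w' : W, cs.length (w * w') = cs.length w + cs.length w' →
    T w * T w' = T (w * w')
  quadratic : ∀ i : B, T (cs.simple i) * T (cs.simple i)
      = algebraMap R H (q i) * T 1 + algebraMap R H (q i - 1) * T (cs.simple i)
  param_conj : ∀ i i' : B, (∃ u : W, cs.simple i' = u * cs.simple i * u⁻¹) → q i = q i'

section HeckeAux

variable {B W R H : Type*} [Group W] [CommRing R] [Ring H] [Algebra R H]
  {M : CoxeterMatrix B} {cs : CoxeterSystem M W} {q : B → R} {T : W → H}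

theorem IsGenericHecke.mulT_up (hH : IsGenericHecke cs q T) (x : W) (i : B)
    (h : cs.length (x * cs.simple i) = cs.length x + 1) :
    T x * T (cs.simple i) = T (x * cs.simple i) :=
  hH.braid x (cs.simple i) (by rw [h, cs.length_simple])

theorem IsGenericHecke.mulT_down (hH : IsGenericHecke cs q T) (x : W) (i : B)
    (h : cs.length (x * cs.simple i) + 1 = cs.length x) :
    T x * T (cs.simple i)
      = algebraMap R H (q i) * T (x * cs.simple i) + algebraMap R H (q i - 1) * T x := by
  set u := x * cs.simple i with hu
  have hx : u * cs.simple i = x := cs.simple_mul_simple_cancel_right i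
  have hlen : cs.length (u * cs.simple i) = cs.length u + 1 := by rw [hx]; omega
  have h1 : T u * T (cs.simple i) = T x := by rw [hH.mulT_up u i hlen, hx]
  calc T x * T (cs.simple i)
      = T u * (T (cs.simple i) * T (cs.simple i)) := by rw [← h1, mul_assoc]
    _ = T u * (algebraMap R H (q i) * T 1 + algebraMap R H (q i - 1) * T (cs.simple i)) := by
        rw [hH.quadratic]
    _ = algebraMap R H (q i) * T u + algebraMap R H (q i - 1) * (T u * T (cs.simple i)) := by
        rw [mul_add, hH.T_one, mul_one, ← Algebra.commutes, ← mul_assoc, ← Algebra.commutes,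
          mul_assoc]
    _ = algebraMap R H (q i) * T u + algebraMap R H (q i - 1) * T x := by rw [h1]

variable (δ : H →ₗ[R] R)

/-- Lemma A : off-diagonal vanishing. -/
theorem IsGenericHecke.delta_mul_eq_zero (hH : IsGenericHecke cs q T)
    (hδ0 : ∀ w : W, w ≠ 1 → δ (T w) = 0) :
    ∀ y x : W, x ≠ y⁻¹ → δ (T x * T y) = 0 := by
  have key : ∀ n : ℕ, ∀ y : W, cs.length y = n → ∀ x : W, x ≠ y⁻¹ → δ (T x * T y) = 0 := by
    intro n
    induction n using Nat.strong_induction_on with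
    | _ n ih =>
      intro y hy x hxy
      rcases eq_or_ne y 1 with rfl | hy1
      · rw [hH.T_one, mul_one]
        exact hδ0 x (by simpa using hxy)
      · obtain ⟨i, hi⟩ := cs.exists_leftDescent_of_ne_one hy1
        rw [cs.isLeftDescent_iff] at hi
        set y'' := cs.simple i * y with hy''
        have hyd : y = cs.simple i * y'' := (cs.simple_mul_simple_cancel_left i).symm
        have hTy : T y = T (cs.simple i) * T y'' := by
          rw [hH.braid _ _ (by rw [cs.length_simple, ← hyd]; omega), ← hyd]
        have hinv : (x * cs.simple i = y''⁻¹) → x = y⁻¹ := by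
          intro h
          have := congrArg (· * cs.simple i) h
          simpa [mul_assoc, cs.simple_mul_simple_cancel_right, hyd, mul_inv_rev,
            cs.inv_simple] using this
        have hlt : cs.length y'' < n := by omega
        rcases cs.length_mul_simple x i with hup | hdown
        · rw [hTy, ← mul_assoc, hH.mulT_up x i hup]
          exact ih _ hlt y'' rfl _ (fun h => hxy (hinv h))
        · rw [hTy, ← mul_assoc, hH.mulT_down x i hdown, add_mul, map_add, mul_assoc,
            ← Algebra.smul_def, mul_assoc, ← Algebra.smul_def, map_smul, map_smul]
          have h1 : δ (T (x * cs.simple i) * T y'') = 0 :=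
            ih _ hlt y'' rfl _ (fun h => hxy (hinv h))
          have h2 : δ (T x * T y'') = 0 := by
            refine ih _ hlt y'' rfl _ (fun h => ?_)
            -- if x = y''⁻¹ then ℓ (x * s i) = ℓ y = ℓ x + 1, contradicting hdown
            have hx1 : x * cs.simple i = y⁻¹ := by
              rw [h, hy'', mul_inv_rev, cs.inv_simple, mul_assoc, cs.simple_mul_simple_self,
                mul_one]
            have : cs.length x = cs.length y'' := by rw [h, cs.length_inv]
            rw [hx1, cs.length_inv] at hdown
            omega
          rw [h1, h2, smul_zero, smul_zero, add_zero]
  intro y x hxy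
  exact key (cs.length y) y rfl x hxy

/-- Lemma B : recursion for the diagonal values. -/
theorem IsGenericHecke.delta_diag_rec (hH : IsGenericHecke cs q T)
    (hδ0 : ∀ w : W, w ≠ 1 → δ (T w) = 0) (x : W) (i : B)
    (h : cs.length (x * cs.simple i) + 1 = cs.length x) :
    δ (T x * T x⁻¹) = q i * δ (T (x * cs.simple i) * T (x * cs.simple i)⁻¹) := by
  have hinv : x⁻¹ = cs.simple i * (x * cs.simple i)⁻¹ := by
    rw [mul_inv_rev, cs.inv_simple, ← mul_assoc, cs.simple_mul_simple_self, one_mul]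
  have hTinv : T x⁻¹ = T (cs.simple i) * T (x * cs.simple i)⁻¹ := by
    rw [hH.braid _ _ (by rw [cs.length_simple, ← hinv, cs.length_inv, cs.length_inv]; omega),
      ← hinv]
  have hne : x ≠ ((x * cs.simple i)⁻¹)⁻¹ := by
    rw [inv_inv]
    intro hc
    have := cs.length_mul_simple_ne x i
    exact this (by rw [← hc])
  rw [hTinv, ← mul_assoc, hH.mulT_down x i h, add_mul, map_add, mul_assoc, ← Algebra.smul_def,
    mul_assoc, ← Algebra.smul_def, map_smul, map_smul,
    hH.delta_mul_eq_zero δ hδ0 _ _ hne, smul_zero, add_zero, smul_eq_mul]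

/-- Lemma C : the diagonal value is the product of the parameters over a reduced word. -/
theorem IsGenericHecke.delta_diag_eq (hH : IsGenericHecke cs q T)
    (hδ1 : δ (T 1) = 1) (hδ0 : ∀ w : W, w ≠ 1 → δ (T w) = 0) :
    ∀ ω : List B, cs.IsReduced ω →
      δ (T (cs.wordProd ω) * T (cs.wordProd ω)⁻¹) = (ω.map q).prod := by
  intro ω
  induction ω using List.reverseRecOn with
  | nil => intro _; simpa [hH.T_one] using hδ1
  | append_singleton ω i ih =>
    intro hred
    unfold CoxeterSystem.IsReduced at hred
    rw [cs.wordProd_append, cs.wordProd_cons, cs.wordProd_nil, mul_one] at hred ⊢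
    have hlen : cs.length (cs.wordProd ω * cs.simple i) = ω.length + 1 := by
      simpa using hred
    have hωred : cs.IsReduced ω := by
      unfold CoxeterSystem.IsReduced
      have h1 := cs.length_wordProd_le ω
      rcases cs.length_mul_simple (cs.wordProd ω) i with hup | hdown <;> omega
    set x := cs.wordProd ω * cs.simple i with hx
    have hxs : x * cs.simple i = cs.wordProd ω := cs.simple_mul_simple_cancel_right i
    have hrec : cs.length (x * cs.simple i) + 1 = cs.length x := by
      rw [hxs, hωred, hlen]
    rw [hH.delta_diag_rec δ hδ0 x i hrec, hxs, ih hωred]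
    simp [mul_comm]

theorem IsGenericHecke.delta_diag_symm (hH : IsGenericHecke cs q T)
    (hδ1 : δ (T 1) = 1) (hδ0 : ∀ w : W, w ≠ 1 → δ (T w) = 0) (x : W) :
    δ (T x * T x⁻¹) = δ (T x⁻¹ * T x⁻¹⁻¹) := by
  obtain ⟨ω, hred, rfl⟩ := cs.exists_reduced_word' x
  have hrev : cs.IsReduced ω.reverse := by
    unfold CoxeterSystem.IsReduced at hred ⊢
    rw [cs.wordProd_reverse, cs.length_inv, List.length_reverse]; exact hred
  have h2 : (cs.wordProd ω)⁻¹ = cs.wordProd ω.reverse := (cs.wordProd_reverse ω).symm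
  rw [hH.delta_diag_eq δ hδ1 hδ0 ω hred, h2, hH.delta_diag_eq δ hδ1 hδ0 ω.reverse hrev,
    List.map_reverse, List.prod_reverse]

theorem IsGenericHecke.delta_diag_isUnit (hH : IsGenericHecke cs q T)
    (hδ1 : δ (T 1) = 1) (hδ0 : ∀ w : W, w ≠ 1 → δ (T w) = 0)
    (hq : ∀ i : B, IsUnit (q i)) (x : W) : IsUnit (δ (T x * T x⁻¹)) := by
  obtain ⟨ω, hred, rfl⟩ := cs.exists_reduced_word' x
  rw [hH.delta_diag_eq δ hδ1 hδ0 ω hred]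
  exact List.prod_isUnit (by simpa using fun i _ => hq i)

end HeckeAux

/-- Let `H` be the generic Hecke algebra of a finite Coxeter system over `R` and let
`δ' : H → R` be the linear form with `δ'(T_1) = 1` and `δ'(T_w) = 0` for `w ≠ 1`. Then
(a) `δ'` is a symmetric trace, `δ'(ab) = δ'(ba)`; and (b) if each parameter `q_s` is invertible
then `δ'` is non-degenerate: no nonzero left ideal (equivalently, for right ideals, no nonzero
element `a` with `δ'(aH) = 0`) is contained in its kernel. -/
theorem hecke_trace_form {B W R H : Type*} [Group W] [Finite W] [CommRing R] [Ring H]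
    [Algebra R H] {M : CoxeterMatrix B} (cs : CoxeterSystem M W) (q : B → R) (T : W → H)
    (hH : IsGenericHecke cs q T)
    (δ : H →ₗ[R] R) (hδ1 : δ (T 1) = 1) (hδ0 : ∀ w : W, w ≠ 1 → δ (T w) = 0) :
    (∀ a b : H, δ (a * b) = δ (b * a)) ∧
    ((∀ i : B, IsUnit (q i)) →
      (∀ a : H, (∀ x : H, δ (x * a) = 0) → a = 0) ∧
      (∀ a : H, (∀ x : H, δ (a * x) = 0) → a = 0)) := by
    classical
  let b : Module.Basis W R H := Module.Basis.mk hH.linearIndependent (by rw [hH.span_top])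
  have hb : ∀ w, b w = T w := fun w => Module.Basis.mk_apply _ _ w
  have hzero := hH.delta_mul_eq_zero δ hδ0
  have hbasis : ∀ x y : W, δ (T x * T y) = δ (T y * T x) := by
    intro x y
    by_cases h : y = x⁻¹
    · subst h
      have := hH.delta_diag_symm δ hδ1 hδ0 x
      rwa [inv_inv] at this
    · have h' : x ≠ y⁻¹ := fun hc => h (by rw [hc, inv_inv])
      rw [hzero y x h', hzero x y h]
  have trace : ∀ a c : H, δ (a * c) = δ (c * a) := by
    have key : (LinearMap.mul R H).compr₂ δ = (LinearMap.mul R H).flip.compr₂ δ := by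
      apply b.ext; intro x
      apply b.ext; intro y
      rw [LinearMap.compr₂_apply, LinearMap.compr₂_apply, LinearMap.flip_apply,
        LinearMap.mul_apply', LinearMap.mul_apply', hb, hb]
      exact hbasis x y
    intro a c
    have := LinearMap.congr_fun (LinearMap.congr_fun key a) c
    simpa using this
  refine ⟨trace, fun hq => ?_⟩
  have right : ∀ a : H, (∀ x : H, δ (a * x) = 0) → a = 0 := by
    intro a ha
    have hco : ∀ w : W, b.repr a w = 0 := by
      intro w
      have hg : δ.comp (LinearMap.mulRight R (T w⁻¹))
          = δ (T w * T w⁻¹) • (b.coord w) := by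
        apply b.ext
        intro v
        rw [LinearMap.comp_apply, LinearMap.mulRight_apply, LinearMap.smul_apply,
          Module.Basis.coord_apply, Module.Basis.repr_self, smul_eq_mul, Finsupp.single_apply, hb]
        rcases eq_or_ne v w with rfl | hvw
        · simp
        · rw [if_neg hvw, mul_zero, hzero w⁻¹ v (by simpa using hvw)]
      have h1 := LinearMap.congr_fun hg a
      rw [LinearMap.comp_apply, LinearMap.mulRight_apply, ha _] at h1
      rw [LinearMap.smul_apply, Module.Basis.coord_apply, smul_eq_mul] at h1
      exact ((hH.delta_diag_isUnit δ hδ1 hδ0 hq w).mul_right_eq_zero).mp h1.symm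
    have hrepr : b.repr a = 0 := Finsupp.ext hco
    exact b.repr.map_eq_zero_iff.mp hrepr
  exact ⟨fun a ha => right a fun x => by rw [trace]; exact ha x, right⟩
end

section
/- Let G be a group, B a subgroup, and s ∈ G. Suppose that the set B s B s B is the disjoint union of B s B and B, and that B s B is the union of exactly q distinct right cosets of B, for some finite q ≥ 1. Then B s B s B is the disjoint union of the sets B s B s and B s, where B s B s = {b₁ s b₂ s : b₁, b₂ ∈ B}. -/
open scoped Pointwise

private lemma coset_mem_iff' {G : Type*} [Group G] (B : Subgroup G) (g x : G) :
    x ∈ (B : Set G) * {g} ↔ x * g⁻¹ ∈ B := by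
  simp only [Set.mem_mul, Set.mem_singleton_iff, SetLike.mem_coe]
  constructor
  · rintro ⟨a, ha, b, rfl, rfl⟩
    simpa using ha
  · intro h
    exact ⟨x * g⁻¹, h, g, rfl, by group⟩

private lemma coset_eq_of_mem' {G : Type*} [Group G] (B : Subgroup G) {g h x : G}
    (hg : x ∈ (B : Set G) * {g}) (hh : x ∈ (B : Set G) * {h}) :
    (B : Set G) * {g} = (B : Set G) * {h} := by
  rw [coset_mem_iff'] at hg hh
  ext y
  rw [coset_mem_iff', coset_mem_iff']
  constructor <;> intro hy
  · have key : y * h⁻¹ = y * g⁻¹ * (x * g⁻¹)⁻¹ * (x * h⁻¹) := by group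
    rw [key]
    exact mul_mem (mul_mem hy (inv_mem hg)) hh
  · have key : y * g⁻¹ = y * h⁻¹ * (x * h⁻¹)⁻¹ * (x * g⁻¹) := by group
    rw [key]
    exact mul_mem (mul_mem hy (inv_mem hh)) hg

private lemma self_mem_coset' {G : Type*} [Group G] (B : Subgroup G) (g : G) :
    g ∈ (B : Set G) * {g} :=
  (coset_mem_iff' B g g).mpr (by simpa using B.one_mem)

/-- Counting lemma: a pairwise-disjoint family of `T1.card` right cosets contained in a union
of at most `T1.card` right cosets must equal that union. -/
private lemma biUnion_coset_eq' {G : Type*} [Group G] (B : Subgroup G) (T1 T2 : Finset G)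
    (hcard : T2.card ≤ T1.card)
    (hdisj : (T1 : Set G).PairwiseDisjoint fun g => (B : Set G) * {g})
    (hsub : (⋃ g ∈ T1, (B : Set G) * {g}) ⊆ ⋃ g ∈ T2, (B : Set G) * {g}) :
    (⋃ g ∈ T1, (B : Set G) * {g}) = ⋃ g ∈ T2, (B : Set G) * {g} := by
  classical
  set f : G → Set G := fun g => (B : Set G) * {g} with hf
  have hinj : Set.InjOn f T1 := by
    intro a ha b hb hab
    by_contra hne
    exact Set.disjoint_left.mp (hdisj ha hb hne) (self_mem_coset' B a)
      (hab ▸ self_mem_coset' B a)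
  have hF : T1.image f ⊆ T2.image f := by
    intro C hC
    rcases Finset.mem_image.mp hC with ⟨g, hg, rfl⟩
    have hgu : g ∈ ⋃ x ∈ T2, f x := hsub (Set.mem_biUnion hg (self_mem_coset' B g))
    rcases Set.mem_iUnion₂.mp hgu with ⟨h, hh, hgh⟩
    exact Finset.mem_image.mpr ⟨h, hh, (coset_eq_of_mem' B (self_mem_coset' B g) hgh).symm⟩
  have heq : T1.image f = T2.image f :=
    Finset.eq_of_subset_of_card_le hF (by
      calc (T2.image f).card ≤ T2.card := Finset.card_image_le
        _ ≤ T1.card := hcard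
        _ = (T1.image f).card := (Finset.card_image_of_injOn hinj).symm)
  calc (⋃ g ∈ T1, f g) = ⋃ C ∈ T1.image f, C :=
        (Finset.set_biUnion_finset_image (f := f) (g := fun C => C)).symm
    _ = ⋃ C ∈ T2.image f, C := by rw [heq]
    _ = ⋃ g ∈ T2, f g := Finset.set_biUnion_finset_image (f := f) (g := fun C => C)

/-- Let `G` be a group, `B` a subgroup and `s ∈ G`. If `BsBsB` is the disjoint union of `BsB`
and `B`, and `BsB` is the (disjoint) union of exactly `q ≥ 1` distinct right cosets of `B`, then
`BsBsB` is the disjoint union of `BsBs` and `Bs`. -/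
theorem double_coset_decomposition {G : Type*} [Group G] (B : Subgroup G) (s : G)
    (q : ℕ) (hq : 1 ≤ q)
    (h1 : (B : Set G) * {s} * (B : Set G) * {s} * (B : Set G)
        = (B : Set G) * {s} * (B : Set G) ∪ (B : Set G))
    (h1d : Disjoint ((B : Set G) * {s} * (B : Set G)) (B : Set G))
    (h2 : ∃ t : Finset G, t.card = q ∧
      ((B : Set G) * {s} * (B : Set G) = ⋃ g ∈ t, (B : Set G) * {g}) ∧
      (t : Set G).PairwiseDisjoint fun g => (B : Set G) * {g}) :
    (B : Set G) * {s} * (B : Set G) * {s} * (B : Set G)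
        = (B : Set G) * {s} * (B : Set G) * {s} ∪ (B : Set G) * {s} ∧
    Disjoint ((B : Set G) * {s} * (B : Set G) * {s}) ((B : Set G) * {s}) := by
  classical
  obtain ⟨t, htcard, htuni, htdisj⟩ := h2
  have hBsB_sub : ∀ a ∈ t, (B : Set G) * {a} ⊆ (B : Set G) * {s} * (B : Set G) := by
    intro a ha
    intro x hx
    rw [htuni]
    exact Set.mem_biUnion ha hx
  have hone_not : (1 : G) ∉ t := by
    intro h1t
    exact Set.disjoint_left.mp h1d (hBsB_sub 1 h1t (self_mem_coset' B 1))
      (by simpa using B.one_mem)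
  -- shifting cosets by s on the right
  have hshift : ∀ (a : G) (x : G), x ∈ (B : Set G) * {a * s} → x * s⁻¹ ∈ (B : Set G) * {a} := by
    intro a x hx
    rw [coset_mem_iff'] at hx ⊢
    have key : x * s⁻¹ * a⁻¹ = x * (a * s)⁻¹ := by group
    rw [key]
    exact hx
  -- disjointness of the shifted cosets from B*{s}
  have hdisj_as_s : ∀ a ∈ t, Disjoint ((B : Set G) * {a * s}) ((B : Set G) * {s}) := by
    intro a ha
    rw [Set.disjoint_left]
    intro x hxa hxs
    have h1' : x * s⁻¹ ∈ (B : Set G) * {a} := hshift a x hxa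
    have h2' : x * s⁻¹ ∈ (B : Set G) := by
      have := hshift 1 x (by simpa using hxs)
      simpa using this
    exact Set.disjoint_left.mp h1d (hBsB_sub a ha h1') h2'
  -- the two finsets of coset representatives
  set T1 : Finset G := t.image (· * s) ∪ {s} with hT1
  set T2 : Finset G := insert (1 : G) t with hT2
  have hs_not : s ∉ t.image (· * s) := by
    intro hs
    rcases Finset.mem_image.mp hs with ⟨a, ha, has⟩
    have : a = 1 := by
      have := mul_right_cancel (b := s) (by simpa using has)
      simpa using this
    exact hone_not (this ▸ ha)
  have hT1card : T1.card = q + 1 := by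
    rw [hT1, Finset.card_union_of_disjoint (by simpa using hs_not),
      Finset.card_image_of_injective _ (fun a b hab => mul_right_cancel hab)]
    simp [htcard]
  have hT2card : T2.card ≤ q + 1 := by
    calc T2.card ≤ t.card + 1 := Finset.card_insert_le _ _
      _ = q + 1 := by rw [htcard]
  -- union computations
  have hBsBs : (B : Set G) * {s} * (B : Set G) * {s} = ⋃ a ∈ t, (B : Set G) * {a * s} := by
    rw [htuni, Set.iUnion₂_mul]
    refine Set.iUnion₂_congr fun a _ => ?_
    rw [mul_assoc, Set.singleton_mul_singleton]
  have hU1 : (⋃ g ∈ T1, (B : Set G) * {g})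
      = (B : Set G) * {s} * (B : Set G) * {s} ∪ (B : Set G) * {s} := by
    rw [hT1, Finset.set_biUnion_union, Finset.set_biUnion_finset_image, hBsBs]
    simp
  have hU2 : (⋃ g ∈ T2, (B : Set G) * {g})
      = (B : Set G) * {s} * (B : Set G) * {s} * (B : Set G) := by
    rw [hT2, Finset.set_biUnion_insert, ← htuni, h1]
    simp [Set.union_comm]
  -- pairwise disjointness of the T1 family
  have hpd : (T1 : Set G).PairwiseDisjoint fun g => (B : Set G) * {g} := by
    intro a ha b hb hne
    rw [hT1] at ha hb
    simp only [Finset.coe_union, Finset.coe_image, Finset.coe_singleton, Set.mem_union,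
      Set.mem_image, Finset.mem_coe, Set.mem_singleton_iff] at ha hb
    rcases ha with ⟨a', ha', rfl⟩ | rfl
    · rcases hb with ⟨b', hb', rfl⟩ | rfl
      · have hne' : a' ≠ b' := fun h => hne (by rw [h])
        have hd : Disjoint ((B : Set G) * {a'}) ((B : Set G) * {b'}) := htdisj ha' hb' hne'
        show Disjoint ((B : Set G) * {a' * s}) ((B : Set G) * {b' * s})
        rw [Set.disjoint_left] at hd ⊢
        intro x hxa hxb
        exact hd (hshift a' x hxa) (hshift b' x hxb)
      · exact hdisj_as_s a' ha'
    · rcases hb with ⟨b', hb', rfl⟩ | rfl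
      · exact (hdisj_as_s b' hb').symm
      · exact absurd rfl hne
  -- the containment
  have hsub : (⋃ g ∈ T1, (B : Set G) * {g}) ⊆ ⋃ g ∈ T2, (B : Set G) * {g} := by
    rw [hU1, hU2]
    apply Set.union_subset
    · exact Set.subset_mul_left _ (by simpa using B.one_mem)
    · calc (B : Set G) * {s} ⊆ (B : Set G) * {s} * (B : Set G) :=
          Set.subset_mul_left _ (by simpa using B.one_mem)
        _ ⊆ _ := by rw [h1]; exact Set.subset_union_left
  have hmain := biUnion_coset_eq' B T1 T2 (le_trans hT2card hT1card.ge) hpd hsub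
  rw [hU1, hU2] at hmain
  refine ⟨hmain.symm, ?_⟩
  rw [hBsBs, Set.disjoint_left]
  intro x hx hxs
  rcases Set.mem_iUnion₂.mp hx with ⟨a, ha, hxa⟩
  exact Set.disjoint_left.mp (hdisj_as_s a ha) hxa hxs
end
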